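/- arXiv:1707.05772 — 7 statements merged into one kernel-verified Lean document; each statement's English description precedes it below -/
import Mathlib

section
/- For every n ≥ 0, every valid notion of n-estimators is nonempty. -/
/-- The type of level-`n` estimators: a 0-estimator is a pair of naturals,
and an `(n+1)`-estimator is a set (required to be finite by validity) of `n`-estimators. -/
def Est : ℕ → Type := fun n => Nat.rec (ℕ × ℕ) (fun _ ih => Set ih) n

/-- Validity of a notion of `n`-estimators (Definition 6.3). -/
def EstValid : (n : ℕ) → Set (Est n) → Prop := fun n =>
  Nat.rec (motive := fun n => Set (Est n) → Prop)
    (fun R => ∃ amin : ℕ, ∃ f : ℕ → ℕ, ∀ a b : ℕ,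
      ((a, b) : ℕ × ℕ) ∈ R ↔ amin ≤ a ∧ f a ≤ b)
    (fun n ih R =>
      (∀ x ∈ R, Set.Finite (show Set (Est n) from x)) ∧
      ih (⋃₀ (show Set (Set (Est n)) from R)) ∧
      (∀ x ∈ R, ∀ y ∈ ⋃₀ (show Set (Set (Est n)) from R),
        (show Set (Est n) from x) ∪ {y} ∈ R) ∧
      (∀ S : Set (Est n), ih S → ∃ r ∈ R, (show Set (Est n) from r) ⊆ S))
    n

/-- Every valid notion of `n`-estimators is nonempty (Proposition 6.5(a)). -/
theorem estValid_nonempty (n : ℕ) (R : Set (Est n)) (hR : EstValid n R) :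
    R.Nonempty := by
  cases n with
  | zero =>
    obtain ⟨amin, f, h⟩ := hR
    exact ⟨(amin, f amin), (h amin (f amin)).2 ⟨le_refl _, le_refl _⟩⟩
  | succ n =>
    obtain ⟨_, hu, _, h3⟩ := hR
    obtain ⟨r, hr, _⟩ := h3 _ hu
    exact ⟨r, hr⟩
end

section
/- For every n, if R and S are valid notions of n-estimators, then R ∩ S is a valid notion of n-estimators, and moreover for n > 0, ⋃(R ∩ S) = ⋃R ∩ ⋃S. -/
/-! At level `n + 1`, a valid notion `R` is closed under adjoining finitely many points of `⋃₀ R`.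
So if `r ∈ R` and `s ∈ S` both lie inside a valid `T ⊆ ⋃₀ R ∩ ⋃₀ S`, then `r ∪ s` lies in `R ∩ S`
and inside `T`. Taking `T = S' ∩ ⋃₀ R ∩ ⋃₀ S`, valid by induction, gives the minimality axiom for
`R ∩ S`; adjoining a point `y ∈ ⋃₀ R ∩ ⋃₀ S` to such an `r ∪ s` shows `⋃₀ (R ∩ S) = ⋃₀ R ∩ ⋃₀ S`. -/

section AdjoinClosed

variable {α : Type*} {R S : Set (Set α)}

def AdjoinClosed (R : Set (Set α)) : Prop :=
  ∀ x ∈ R, ∀ y ∈ ⋃₀ R, x ∪ {y} ∈ R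

theorem AdjoinClosed.union_mem (hR : AdjoinClosed R) {x t : Set α} (hx : x ∈ R) (ht : t.Finite)
    (hsub : t ⊆ ⋃₀ R) : x ∪ t ∈ R := by
  induction t, ht using Set.Finite.induction_on with
  | empty => simpa using hx
  | @insert y t _ _ ih =>
    rw [Set.insert_eq, Set.union_comm {y}, ← Set.union_assoc]
    exact hR _ (ih fun z hz => hsub (Set.mem_insert_of_mem y hz)) y (hsub (Set.mem_insert y t))

theorem AdjoinClosed.exists_mem_inter_subset (hR : AdjoinClosed R) (hS : AdjoinClosed S)
    {T r s : Set α} (hTR : T ⊆ ⋃₀ R) (hTS : T ⊆ ⋃₀ S)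
    (hr : r ∈ R) (hrfin : r.Finite) (hrT : r ⊆ T) (hs : s ∈ S) (hsfin : s.Finite) (hsT : s ⊆ T) :
    ∃ u ∈ R ∩ S, u ⊆ T := by
  refine ⟨r ∪ s, ⟨?_, ?_⟩, Set.union_subset hrT hsT⟩
  · exact hR.union_mem hr hsfin (hsT.trans hTR)
  · rw [Set.union_comm]
    exact hS.union_mem hs hrfin (hrT.trans hTS)

theorem AdjoinClosed.sUnion_inter (hR : AdjoinClosed R) (hS : AdjoinClosed S)
    (hne : (R ∩ S).Nonempty) : ⋃₀ (R ∩ S) = ⋃₀ R ∩ ⋃₀ S := by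
  refine Set.Subset.antisymm (Set.subset_inter (Set.sUnion_mono Set.inter_subset_left)
    (Set.sUnion_mono Set.inter_subset_right)) ?_
  obtain ⟨u, huR, huS⟩ := hne
  rintro y ⟨hyR, hyS⟩
  exact ⟨u ∪ {y}, ⟨hR u huR y hyR, hS u huS y hyS⟩, Or.inr rfl⟩

end AdjoinClosed

namespace EstValid

variable {n : ℕ}

theorem inter_zero {R S : Set (Est 0)} (hR : EstValid 0 R) (hS : EstValid 0 S) :
    EstValid 0 (R ∩ S) := by
  obtain ⟨aR, fR, hR⟩ := hR
  obtain ⟨aS, fS, hS⟩ := hS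
  refine ⟨max aR aS, fun a => max (fR a) (fS a), fun a b => ?_⟩
  refine (and_congr (hR a b) (hS a b)).trans ?_
  simp only [max_le_iff]
  tauto

theorem exists_mem_inter_subset {R S : Set (Set (Est n))} {T : Set (Est n)}
    (hR : EstValid (n + 1) R) (hS : EstValid (n + 1) S) (hT : EstValid n T)
    (hTsub : T ⊆ ⋃₀ R ∩ ⋃₀ S) : ∃ u ∈ R ∩ S, u ⊆ T := by
  obtain ⟨hRfin, -, hRcl, hRmin⟩ := hR
  obtain ⟨hSfin, -, hScl, hSmin⟩ := hS
  obtain ⟨r, hr, hrT⟩ := hRmin T hT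
  obtain ⟨s, hs, hsT⟩ := hSmin T hT
  exact AdjoinClosed.exists_mem_inter_subset hRcl hScl (hTsub.trans Set.inter_subset_left)
    (hTsub.trans Set.inter_subset_right) hr (hRfin r hr) hrT hs (hSfin s hs) hsT

theorem sUnion_inter {R S : Set (Set (Est n))} (hR : EstValid (n + 1) R)
    (hS : EstValid (n + 1) S) (hRS : EstValid n (⋃₀ R ∩ ⋃₀ S)) :
    ⋃₀ (R ∩ S) = ⋃₀ R ∩ ⋃₀ S :=
  have ⟨u, hu, _⟩ := exists_mem_inter_subset hR hS hRS subset_rfl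
  AdjoinClosed.sUnion_inter hR.2.2.1 hS.2.2.1 ⟨u, hu⟩

theorem inter_succ (ih : ∀ R S : Set (Est n), EstValid n R → EstValid n S → EstValid n (R ∩ S))
    {R S : Set (Set (Est n))} (hR : EstValid (n + 1) R) (hS : EstValid (n + 1) S) :
    EstValid (n + 1) (R ∩ S) := by
  have hRS : EstValid n (⋃₀ R ∩ ⋃₀ S) := ih _ _ hR.2.1 hS.2.1
  have hU := sUnion_inter hR hS hRS
  refine ⟨fun x hx => hR.1 x hx.1, hU ▸ hRS, ?_, fun T hT => ?_⟩
  · intro x hx y hy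
    replace hy := hU.subset hy
    exact ⟨hR.2.2.1 x hx.1 y hy.1, hS.2.2.1 x hx.2 y hy.2⟩
  · obtain ⟨u, hu, huT⟩ := exists_mem_inter_subset hR hS (ih _ _ hT hRS) Set.inter_subset_right
    exact ⟨u, hu, huT.trans Set.inter_subset_left⟩

theorem inter : ∀ {n : ℕ} {R S : Set (Est n)}, EstValid n R → EstValid n S → EstValid n (R ∩ S)
  | 0, _, _ => inter_zero
  | _ + 1, _, _ => inter_succ fun _ _ => inter

end EstValid

/-- Proposition 6.5(b): the intersection of two valid notions of `n`-estimators is valid,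
and moreover for `n > 0` (i.e. at level `n+1`) the union of the intersection is the
intersection of the unions: `⋃₀(R ∩ S) = ⋃₀R ∩ ⋃₀S`. -/
theorem estValid_inter :
    (∀ n : ℕ, ∀ R S : Set (Est n), EstValid n R → EstValid n S → EstValid n (R ∩ S)) ∧
    (∀ n : ℕ, ∀ R S : Set (Est (n + 1)), EstValid (n + 1) R → EstValid (n + 1) S →
      ⋃₀ (show Set (Set (Est n)) from R ∩ S) =
        ⋃₀ (show Set (Set (Est n)) from R) ∩ ⋃₀ (show Set (Set (Est n)) from S)) :=
  ⟨fun _ _ _ => EstValid.inter,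
    fun _ _ _ hR hS => EstValid.sUnion_inter hR hS (EstValid.inter hR.2.1 hS.2.1)⟩
end

section
/- For every n, the collection of valid notions of n-estimators is a directed (downward) family under inclusion: any two valid notions have a common valid refinement (namely their intersection), and consequently any finite collection of valid notions of n-estimators has nonempty intersection which is itself a valid notion. -/
/-!
By induction on `n`, the intersection of two valid notions is valid; finite intersections
follow, and they are nonempty since a valid notion `R` of `(n+1)`-estimators has a member inside
the valid notion `⋃₀ R`. In the inductive step the key point is that every valid `T` contains a
member of `R ∩ S`: pick `r ∈ R` and `s ∈ S` inside the valid notion `T ∩ ⋃₀ R ∩ ⋃₀ S`; closure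
under adding points of the union puts `r ∪ s` in both `R` and `S`, and it still lies in `T`.
-/

open Set

structure LiftValid {α : Type*} (V : Set α → Prop) (R : Set (Set α)) : Prop where
  finite : ∀ x ∈ R, x.Finite
  sUnion : V (⋃₀ R)
  union_singleton_mem : ∀ x ∈ R, ∀ y ∈ ⋃₀ R, x ∪ {y} ∈ R
  exists_subset : ∀ S, V S → ∃ r ∈ R, r ⊆ S

namespace LiftValid

variable {α : Type*} {V : Set α → Prop} {R S : Set (Set α)}

theorem union_mem (hR : LiftValid V R) {x s : Set α} (hx : x ∈ R) (hs : s.Finite)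
    (hsR : s ⊆ ⋃₀ R) : x ∪ s ∈ R := by
  induction s, hs using Finite.induction_on with
  | empty => simpa using hx
  | @insert y t _ _ ih =>
    rw [insert_subset_iff] at hsR
    rw [union_insert, ← union_singleton]
    exact hR.union_singleton_mem _ (ih hsR.2) y hsR.1

theorem nonempty (hR : LiftValid V R) : R.Nonempty :=
  let ⟨r, hr, _⟩ := hR.exists_subset _ hR.sUnion
  ⟨r, hr⟩

variable (hV : InfClosed {T | V T})
include hV

theorem exists_mem_inter_subset (hR : LiftValid V R) (hS : LiftValid V S) {T : Set α}
    (hT : V T) : ∃ t ∈ R ∩ S, t ⊆ T := by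
  have hT' : V (T ∩ (⋃₀ R ∩ ⋃₀ S)) := hV hT (hV hR.sUnion hS.sUnion)
  obtain ⟨r, hr, hrT⟩ := hR.exists_subset _ hT'
  obtain ⟨s, hs, hsT⟩ := hS.exists_subset _ hT'
  have hrs : r ∪ s ∈ R := hR.union_mem hr (hS.finite s hs) fun _ hz => (hsT hz).2.1
  have hsr : s ∪ r ∈ S := hS.union_mem hs (hR.finite r hr) fun _ hz => (hrT hz).2.2
  exact ⟨r ∪ s, ⟨hrs, union_comm s r ▸ hsr⟩,
    union_subset (fun _ hz => (hrT hz).1) fun _ hz => (hsT hz).1⟩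

theorem sUnion_inter (hR : LiftValid V R) (hS : LiftValid V S) :
    ⋃₀ (R ∩ S) = ⋃₀ R ∩ ⋃₀ S := by
  refine (subset_inter (sUnion_mono inter_subset_left) (sUnion_mono inter_subset_right)).antisymm
    ?_
  rintro y ⟨hyR, hyS⟩
  obtain ⟨t, ⟨htR, htS⟩, -⟩ := exists_mem_inter_subset hV hR hS (hV hR.sUnion hS.sUnion)
  exact ⟨t ∪ {y}, ⟨hR.union_singleton_mem t htR y hyR, hS.union_singleton_mem t htS y hyS⟩,
    mem_union_right _ rfl⟩

theorem inter (hR : LiftValid V R) (hS : LiftValid V S) : LiftValid V (R ∩ S) where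
  finite x hx := hR.finite x hx.1
  sUnion := sUnion_inter hV hR hS ▸ hV hR.sUnion hS.sUnion
  union_singleton_mem x hx y hy :=
    ⟨hR.union_singleton_mem x hx.1 y (sUnion_mono inter_subset_left hy),
      hS.union_singleton_mem x hx.2 y (sUnion_mono inter_subset_right hy)⟩
  exists_subset _ hT := exists_mem_inter_subset hV hR hS hT

theorem infClosed : InfClosed {R | LiftValid V R} :=
  fun _ hR _ hS => inter hV hR hS

end LiftValid

theorem estValid_succ_iff (n : ℕ) (R : Set (Set (Est n))) :
    EstValid (n + 1) R ↔ LiftValid (EstValid n) R :=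
  ⟨fun ⟨h₁, h₂, h₃, h₄⟩ => ⟨h₁, h₂, h₃, h₄⟩, fun ⟨h₁, h₂, h₃, h₄⟩ => ⟨h₁, h₂, h₃, h₄⟩⟩

theorem infClosed_estValid_zero : InfClosed {R : Set (Est 0) | EstValid 0 R} := by
  rintro R ⟨aR, fR, hR⟩ S ⟨aS, fS, hS⟩
  refine ⟨max aR aS, fun a => max (fR a) (fS a), fun a b => ?_⟩
  change (a, b) ∈ R ∧ (a, b) ∈ S ↔ _
  rw [hR, hS, max_le_iff, max_le_iff]
  tauto

theorem infClosed_estValid (n : ℕ) : InfClosed {R : Set (Est n) | EstValid n R} := by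
  induction n with
  | zero => exact infClosed_estValid_zero
  | succ n ih =>
    intro R hR S hS
    exact (estValid_succ_iff n _).2 <|
      LiftValid.inter ih ((estValid_succ_iff n R).1 hR) ((estValid_succ_iff n S).1 hS)

theorem EstValid.nonempty {n : ℕ} {R : Set (Est n)} (hR : EstValid n R) : R.Nonempty := by
  cases n with
  | zero =>
    obtain ⟨amin, f, h⟩ := hR
    exact ⟨(amin, f amin), (h amin (f amin)).2 ⟨le_rfl, le_rfl⟩⟩
  | succ n => exact ((estValid_succ_iff n R).1 hR).nonempty

/-- The valid notions of `n`-estimators form a downward-directed family under inclusion: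
any two valid notions have a common valid refinement (their intersection), and consequently
any finite nonempty collection of valid notions has a nonempty intersection which is itself
a valid notion. -/
theorem estValid_directed :
    (∀ n : ℕ, ∀ R S : Set (Est n), EstValid n R → EstValid n S →
      ∃ T : Set (Est n), EstValid n T ∧ T ⊆ R ∧ T ⊆ S) ∧
    (∀ n : ℕ, ∀ C : Set (Set (Est n)), C.Finite → C.Nonempty →
      (∀ R ∈ C, EstValid n R) → EstValid n (⋂₀ C) ∧ (⋂₀ C).Nonempty) := by
  refine ⟨fun n R S hR hS => (infClosed_estValid n).codirectedOn R hR S hS,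
    fun n C hfin hne hC => ?_⟩
  have hvalid : EstValid n (⋂₀ C) := (infClosed_estValid n).sInf_mem_of_nonempty hfin hne hC
  exact ⟨hvalid, hvalid.nonempty⟩
end

section
/- Let ≺ be a well-founded relation on ℕ and A : ℕ → ℕ a function. Then for each n, the tree of finite ≺-descending sequences starting at n in which the (k+1)-st element is below A applied to the maximum of n and the k-th element is finite; in particular there is a uniform bound L(n) on the length of such bounded descending sequences. -/
/-- The finite sequence `l` is a `≺`-descending sequence starting at `n`, with each next
element bounded by `A (max n (previous element))`. -/
def BoundedDesc (r : ℕ → ℕ → Prop) (A : ℕ → ℕ) (n : ℕ) (l : List ℕ) : Prop :=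
  (∀ h : 0 < l.length, l.getD 0 0 = n) ∧
  (∀ i : ℕ, i + 1 < l.length →
    r (l.getD (i + 1) 0) (l.getD i 0) ∧ l.getD (i + 1) 0 < A (max n (l.getD i 0)))

/-! A finitely branching relation `R` whose converse is well-founded admits only finitely many
`R`-chains from a given root: by well-founded induction, the chains from `x` are `[]` and the
`y :: t` with `t` a chain from one of the finitely many successors `y` of `x`. Bounded descending
sequences from `n` are exactly such chains for the step `a ↦ b` with `b ≺ a` and
`b < A (max n a)`, which has fewer than `A (max n a)` successors of `a`. -/

theorem List.setOf_isChain_cons_finite {α : Type*} {R : α → α → Prop}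
    (hwf : WellFounded (flip R)) (hR : ∀ a, {b | R a b}.Finite) (x : α) :
    {t : List α | (x :: t).IsChain R}.Finite := by
  induction x using hwf.induction with
  | _ x ih =>
    have hsub : {t : List α | (x :: t).IsChain R} ⊆
        insert [] (⋃ y ∈ {y | R x y}, (y :: ·) '' {t | (y :: t).IsChain R}) := by
      rintro (_ | ⟨y, t⟩) ht
      · exact Set.mem_insert _ _
      · obtain ⟨hxy, hchain⟩ := List.isChain_cons_cons.mp ht
        exact Or.inr (Set.mem_biUnion hxy ⟨t, hchain, rfl⟩)
    exact ((hR x).biUnion fun y hy => (ih y hy).image _).insert _ |>.subset hsub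

def boundedDescStep (r : ℕ → ℕ → Prop) (A : ℕ → ℕ) (n a b : ℕ) : Prop :=
  r b a ∧ b < A (max n a)

theorem boundedDesc_cons_iff {r : ℕ → ℕ → Prop} {A : ℕ → ℕ} {n a : ℕ} {t : List ℕ} :
    BoundedDesc r A n (a :: t) ↔ a = n ∧ (a :: t).IsChain (boundedDescStep r A n) := by
  rw [List.isChain_iff_getElem]
  refine and_congr (by simp) (forall_congr' fun i => forall_congr' fun hi => ?_)
  rw [List.getD_eq_getElem _ _ hi, List.getD_eq_getElem _ _ (Nat.lt_of_succ_lt hi)]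
  rfl

theorem setOf_boundedDesc_finite {r : ℕ → ℕ → Prop} (hwf : WellFounded r) (A : ℕ → ℕ) (n : ℕ) :
    {l : List ℕ | BoundedDesc r A n l}.Finite := by
  have hchains := List.setOf_isChain_cons_finite (R := boundedDescStep r A n)
    (hwf.mono fun _ _ h => h.1) (fun a => (Set.finite_Iio (A (max n a))).subset fun _ h => h.2) n
  refine (hchains.image (n :: ·)).insert [] |>.subset ?_
  rintro (_ | ⟨a, t⟩) hl
  · exact Set.mem_insert _ _
  · obtain ⟨rfl, hchain⟩ := boundedDesc_cons_iff.mp hl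
    exact Or.inr ⟨t, hchain, rfl⟩

/-- If `≺` is well-founded and `A : ℕ → ℕ`, then for each `n` the tree of `A`-bounded
`≺`-descending sequences starting at `n` is finite; in particular there is a uniform
bound `L n` on the lengths of such sequences. -/
theorem boundedDesc_finite (r : ℕ → ℕ → Prop) (hwf : WellFounded r) (A : ℕ → ℕ) :
    (∀ n : ℕ, {l : List ℕ | BoundedDesc r A n l}.Finite) ∧
    ∃ L : ℕ → ℕ, ∀ n : ℕ, ∀ l : List ℕ, BoundedDesc r A n l → l.length ≤ L n := by
  have hfin := setOf_boundedDesc_finite hwf A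
  choose L hL using fun n => ((hfin n).image List.length).bddAbove
  exact ⟨hfin, L, fun n l hl => hL n ⟨l, hl, rfl⟩⟩
end

section
/- For a Σ⁰₂-type formula ∀x ∃y > x, P(y) with P : ℕ → Prop decidable: the formula ∀x ∃y > x, P(y) is true iff for every a there exists b > a such that ∃y, a ≤ y < b ∧ P(y); moreover if the formula is true then for every valid notion R of 0-estimators there exists (a,b) ∈ R with ∃y, a ≤ y < b ∧ P(y) — indeed every (a,b) ∈ R with the threshold function chosen appropriately witnesses this. -/
/-- A set `R ⊆ ℕ × ℕ` is a valid notion of 0-estimators. -/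
def Valid0 (R : Set (ℕ × ℕ)) : Prop :=
  ∃ amin : ℕ, ∃ f : ℕ → ℕ, ∀ a b : ℕ, (a, b) ∈ R ↔ amin ≤ a ∧ f a ≤ b

/-- The formula `∀x ∃y > x, P y` passes the 0-estimator `(a, b)`. -/
def Passes (P : ℕ → Prop) (p : ℕ × ℕ) : Prop :=
  ∃ y : ℕ, p.1 ≤ y ∧ y < p.2 ∧ P y

/-!
The threshold function of a valid notion may be chosen freely, so once `P` holds
unboundedly often one can take `f a` to be one more than a witness `y ≥ a` of `P`:
then every estimator `(a, b)` with `b ≥ f a` has that witness in `[a, b)`.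
Conversely, every valid notion contains estimators `(a, b)` with `a ≥ amin` and `b` as
large as we please, so it contains one whose window reaches a witness above `amin`.
-/

theorem valid0_setOf (amin : ℕ) (f : ℕ → ℕ) :
    Valid0 {p | amin ≤ p.1 ∧ f p.1 ≤ p.2} :=
  ⟨amin, f, fun _ _ => Iff.rfl⟩

section Unbounded

variable {P : ℕ → Prop}

theorem forall_exists_lt_iff_forall_exists_passes :
    (∀ x : ℕ, ∃ y, x < y ∧ P y) ↔ ∀ a : ℕ, ∃ b, a < b ∧ Passes P (a, b) := by
  constructor
  · intro h a
    obtain ⟨y, hay, hy⟩ := h a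
    exact ⟨y + 1, by omega, y, hay.le, Nat.lt_succ_self y, hy⟩
  · intro h x
    obtain ⟨_, _, y, hxy, _, hy⟩ := h (x + 1)
    exact ⟨y, hxy, hy⟩

theorem Valid0.exists_passes (h : ∀ x : ℕ, ∃ y, x < y ∧ P y) {R : Set (ℕ × ℕ)}
    (hR : Valid0 R) : ∃ p ∈ R, Passes P p := by
  obtain ⟨amin, f, hRf⟩ := hR
  obtain ⟨y, hy, hPy⟩ := h amin
  refine ⟨(amin, max (f amin) (y + 1)), (hRf _ _).2 ⟨le_rfl, le_max_left _ _⟩, ?_⟩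
  exact ⟨y, hy.le, (Nat.lt_succ_self y).trans_le (le_max_right _ _), hPy⟩

theorem exists_valid0_forall_passes (h : ∀ x : ℕ, ∃ y, x < y ∧ P y) :
    ∃ R : Set (ℕ × ℕ), Valid0 R ∧ ∀ p ∈ R, Passes P p := by
  choose g hg using h
  refine ⟨_, valid0_setOf 0 (fun a => g a + 1), ?_⟩
  rintro ⟨a, b⟩ ⟨-, hb⟩
  exact ⟨g a, (hg a).1.le, hb, (hg a).2⟩

end Unbounded

theorem sigma02_passes_general (P : ℕ → Prop) :
    ((∀ x : ℕ, ∃ y, x < y ∧ P y) ↔ ∀ a : ℕ, ∃ b, a < b ∧ Passes P (a, b)) ∧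
    ((∀ x : ℕ, ∃ y, x < y ∧ P y) → ∀ R : Set (ℕ × ℕ), Valid0 R → ∃ p ∈ R, Passes P p) ∧
    ((∀ x : ℕ, ∃ y, x < y ∧ P y) → ∃ R : Set (ℕ × ℕ), Valid0 R ∧ ∀ p ∈ R, Passes P p) :=
  ⟨forall_exists_lt_iff_forall_exists_passes, fun h _ hR => hR.exists_passes h,
    exists_valid0_forall_passes⟩

/-- For decidable `P`: the formula `∀x ∃y > x, P y` is true iff for every `a` some
`(a, b)` with `b > a` is passed; moreover, if it is true then every valid notion of
0-estimators contains a passed estimator, and indeed (with the threshold function chosen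
appropriately) there is a valid notion all of whose members are passed. -/
theorem sigma02_passes (P : ℕ → Prop) [DecidablePred P] :
    ((∀ x : ℕ, ∃ y, x < y ∧ P y) ↔ ∀ a : ℕ, ∃ b, a < b ∧ Passes P (a, b)) ∧
    ((∀ x : ℕ, ∃ y, x < y ∧ P y) → ∀ R : Set (ℕ × ℕ), Valid0 R → ∃ p ∈ R, Passes P p) ∧
    ((∀ x : ℕ, ∃ y, x < y ∧ P y) → ∃ R : Set (ℕ × ℕ), Valid0 R ∧ ∀ p ∈ R, Passes P p) :=
  sigma02_passes_general P
end

section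
/- Dually: for decidable P : ℕ → Prop, the formula ∀x ∃y > x, P(y) is false (i.e., ∃x ∀y > x, ¬P(y)) iff there exists a valid notion R of 0-estimators such that no (a,b) ∈ R is passed, where (a,b) is passed iff ∃y, a ≤ y < b ∧ P(y). -/
/-- For decidable `P`: the formula `∀x ∃y > x, P y` is false, i.e. `∃x ∀y > x, ¬P y`,
iff there is a valid notion of 0-estimators none of whose members is passed. -/
theorem sigma02_fails (P : ℕ → Prop) [DecidablePred P] :
    (∃ x : ℕ, ∀ y : ℕ, x < y → ¬ P y) ↔
      ∃ R : Set (ℕ × ℕ), Valid0 R ∧ ∀ p ∈ R, ¬ Passes P p := by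
  constructor
  · rintro ⟨x, hx⟩
    refine ⟨{p | x + 1 ≤ p.1}, ⟨x + 1, fun _ => 0, fun a b => by simp [Set.mem_setOf_eq]⟩, ?_⟩
    rintro ⟨a, b⟩ ha ⟨y, hay, _, hPy⟩
    exact hx y (lt_of_lt_of_le (Nat.lt_succ_self x) (le_trans ha hay)) hPy
  · rintro ⟨R, ⟨amin, f, hR⟩, hnp⟩
    refine ⟨amin, fun y hy hPy => ?_⟩
    exact hnp (y, f y + y + 1) ((hR _ _).2 ⟨hy.le, by omega⟩)
      ⟨y, le_refl y, by omega, hPy⟩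
end

section
/- Together, the two previous facts give well-definedness at level 0: for every decidable P : ℕ → Prop, there exists a valid notion R of 0-estimators such that all elements of R agree on whether the formula ∀x ∃y > x, P(y) passes them, and this common verdict equals the truth value of ∀x ∃y > x, P(y). -/
/-- Well-definedness at level 0: for every decidable `P` there is a valid notion `R` of
0-estimators whose members all agree on whether the formula `∀x ∃y > x, P y` passes
them, and this common verdict equals the truth value of `∀x ∃y > x, P y`. -/
theorem sigma02_well_defined (P : ℕ → Prop) [DecidablePred P] :
    ∃ R : Set (ℕ × ℕ), Valid0 R ∧
      ((∀ p ∈ R, Passes P p) ∨ (∀ p ∈ R, ¬ Passes P p)) ∧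
      ((∀ p ∈ R, Passes P p) ↔ ∀ x : ℕ, ∃ y, x < y ∧ P y) := by
  by_cases h : ∀ x : ℕ, ∃ y, x < y ∧ P y
  · -- true case
    have h' : ∀ a : ℕ, ∃ y, a < y ∧ P y := h
    refine ⟨{p | 0 ≤ p.1 ∧ Nat.find (h' p.1) + 1 ≤ p.2}, ⟨0, fun a => Nat.find (h' a) + 1,
      fun a b => Iff.rfl⟩, ?_, ?_⟩
    · left
      rintro ⟨a, b⟩ ⟨-, hb⟩
      have hf := Nat.find_spec (h' a)
      exact ⟨Nat.find (h' a), hf.1.le, lt_of_lt_of_le (Nat.lt_succ_self _) hb, hf.2⟩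
    · constructor
      · intro _; exact h
      · intro _
        rintro ⟨a, b⟩ ⟨-, hb⟩
        have hf := Nat.find_spec (h' a)
        exact ⟨Nat.find (h' a), hf.1.le, lt_of_lt_of_le (Nat.lt_succ_self _) hb, hf.2⟩
  · push_neg at h
    obtain ⟨x, hx⟩ := h
    refine ⟨{p | x + 1 ≤ p.1 ∧ p.1 ≤ p.2}, ⟨x + 1, id, fun a b => Iff.rfl⟩, ?_, ?_⟩
    · right
      rintro ⟨a, b⟩ ⟨ha, -⟩ ⟨y, hy1, hy2, hy3⟩
      exact hx y (lt_of_lt_of_le (Nat.lt_succ_self x) (le_trans ha hy1)) hy3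
    · constructor
      · intro hall
        exfalso
        obtain ⟨y, hy1, hy2, hy3⟩ := hall (x + 1, x + 1) ⟨le_refl _, le_refl _⟩
        exact absurd hy2 (not_lt.mpr hy1)
      · intro hall; exact absurd (hall x) (by push_neg; exact fun y hy => hx y hy)
end
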